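/- Let w be a weight on ℝ with w > 0 a.e., k ∈ ℤ, and u = Σ_{I∈𝒫_k} ⟨w⟩_I χ_I the dyadic averaging of w at scale 2^{-k}. Then for every bounded interval J, ⟨u^{-1}⟩_J ≤ (1/|J|) Σ_{I ∈ 𝒫_k, I∩J ≠ ∅} (|I∩J|/|I|) ∫_I w^{-1}. In particular ⟨u^{-1}⟩_J ≤ 3⟨w^{-1}⟩_{J*} when |J| > 2^{-k}. -/

import Mathlib

open MeasureTheory

/-- The dyadic interval of generation `k` and index `j`: `[j·2^{-k}, (j+1)·2^{-k})`. -/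
def dyadicInterval (k : ℤ) (j : ℤ) : Set ℝ :=
  Set.Ico ((j : ℝ) * (2 : ℝ) ^ (-k)) (((j : ℝ) + 1) * (2 : ℝ) ^ (-k))

/-- `J*`: the union of the dyadic intervals of generation `k` that intersect `J`. -/
def dyadicEnvelope (k : ℤ) (J : Set ℝ) : Set ℝ :=
  ⋃ (j : ℤ) (_ : (dyadicInterval k j ∩ J).Nonempty), dyadicInterval k j

/-- The averaging of `w` at scale `2^{-k}`: `u = Σ_{I∈𝒫_k} ⟨w⟩_I χ_I`. -/
noncomputable def dyadicAvg (w : ℝ → ℝ) (k : ℤ) (x : ℝ) : ℝ :=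
  ((2 : ℝ) ^ (-k))⁻¹ *
    ∫ t in dyadicInterval k ⌊x / (2 : ℝ) ^ (-k)⌋, w t

/-! The key inequality `(⟨w⟩_I)⁻¹ ≤ ⟨w⁻¹⟩_I` is obtained by averaging the tangent line of
`t ↦ t⁻¹` at `c = ⟨w⟩_I`, which lies below the graph on `(0, ∞)`. The average of `u⁻¹` over `J`
then splits along the finitely many dyadic intervals meeting `J`, on each of which `u` is
constant. For the second bound, `J*` has length at most `|J| + 2·2^{-k} < 3|J|`. -/

open Set

lemma two_mul_inv_sub_inv_sq_mul_le_inv {c x : ℝ} (hc : 0 < c) (hx : 0 < x) :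
    2 * c⁻¹ - c⁻¹ ^ 2 * x ≤ x⁻¹ := by
  have hgap : x⁻¹ - (2 * c⁻¹ - c⁻¹ ^ 2 * x) = (x - c) ^ 2 / (x * c ^ 2) := by
    field_simp
    ring
  have : 0 ≤ (x - c) ^ 2 / (x * c ^ 2) := by positivity
  linarith

theorem inv_average_le_average_inv {α : Type*} [MeasurableSpace α] {μ : Measure α}
    [IsFiniteMeasure μ] [NeZero μ] {w : α → ℝ} (hpos : ∀ᵐ x ∂μ, 0 < w x)
    (hw : Integrable w μ) (hwinv : Integrable (fun x ↦ (w x)⁻¹) μ) :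
    (⨍ x, w x ∂μ)⁻¹ ≤ ⨍ x, (w x)⁻¹ ∂μ := by
  set c := ⨍ x, w x ∂μ
  set m := μ.real univ
  have hm : 0 < m := measureReal_univ_pos
  obtain ⟨x₀, hx₀, hx₀c⟩ := exists_notMem_null_le_average (NeZero.ne μ) hw (ae_iff.1 hpos)
  have hc : 0 < c := (not_not.1 hx₀).trans_le hx₀c
  have hint_w : ∫ x, w x ∂μ = m * c := (measure_smul_average μ w).symm
  have htangent : ∫ x, (2 * c⁻¹ - c⁻¹ ^ 2 * w x) ∂μ ≤ ∫ x, (w x)⁻¹ ∂μ :=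
    integral_mono_ae ((integrable_const _).sub (hw.const_mul _)) hwinv
      (hpos.mono fun x hx ↦ two_mul_inv_sub_inv_sq_mul_le_inv hc hx)
  rw [integral_sub (integrable_const _) (hw.const_mul _), integral_const, integral_const_mul,
    hint_w, smul_eq_mul] at htangent
  rw [average_eq, smul_eq_mul, le_inv_mul_iff₀ hm]
  calc m * c⁻¹ = m * (2 * c⁻¹) - c⁻¹ ^ 2 * (m * c) := by field_simp; ring
    _ ≤ ∫ x, (w x)⁻¹ ∂μ := htangent

section Dyadic

variable {k j : ℤ}

lemma mem_dyadicInterval_iff {x : ℝ} :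
    x ∈ dyadicInterval k j ↔ ⌊x / (2 : ℝ) ^ (-k)⌋ = j := by
  have hh : (0 : ℝ) < 2 ^ (-k) := by positivity
  rw [Int.floor_eq_iff, le_div_iff₀ hh, div_lt_iff₀ hh]
  rfl

lemma mem_dyadicInterval_floor (k : ℤ) (x : ℝ) :
    x ∈ dyadicInterval k ⌊x / (2 : ℝ) ^ (-k)⌋ :=
  mem_dyadicInterval_iff.2 rfl

lemma pairwise_disjoint_dyadicInterval (k : ℤ) :
    Pairwise (Function.onFun Disjoint (dyadicInterval k)) := fun _ _ hij ↦
  disjoint_left.2 fun _ hi hj ↦ hij ((mem_dyadicInterval_iff.1 hi).symm.trans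
    (mem_dyadicInterval_iff.1 hj))

lemma measurableSet_dyadicInterval : MeasurableSet (dyadicInterval k j) := measurableSet_Ico

lemma volume_dyadicInterval : volume (dyadicInterval k j) = ENNReal.ofReal (2 ^ (-k)) := by
  rw [dyadicInterval, Real.volume_Ico]
  ring_nf

lemma volume_real_dyadicInterval : volume.real (dyadicInterval k j) = 2 ^ (-k) := by
  rw [measureReal_def, volume_dyadicInterval, ENNReal.toReal_ofReal (by positivity)]

lemma setAverage_dyadicInterval (f : ℝ → ℝ) :
    ⨍ t in dyadicInterval k j, f t = ((2 : ℝ) ^ (-k))⁻¹ * ∫ t in dyadicInterval k j, f t := by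
  rw [setAverage_eq, volume_real_dyadicInterval, smul_eq_mul]

lemma integrableOn_dyadicInterval {f : ℝ → ℝ} (hf : LocallyIntegrable f volume) :
    IntegrableOn f (dyadicInterval k j) volume :=
  (hf.integrableOn_isCompact isCompact_Icc).mono_set Ico_subset_Icc_self

theorem inv_setAverage_dyadicInterval_le {w : ℝ → ℝ} (hw_pos : ∀ x, 0 < w x)
    (hw : LocallyIntegrable w volume) (hwinv : LocallyIntegrable (fun x ↦ (w x)⁻¹) volume) :
    (⨍ t in dyadicInterval k j, w t)⁻¹ ≤ ⨍ t in dyadicInterval k j, (w t)⁻¹ := by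
  have : IsFiniteMeasure (volume.restrict (dyadicInterval k j)) :=
    isFiniteMeasure_restrict.2 (by simp [volume_dyadicInterval])
  have : NeZero (volume.restrict (dyadicInterval k j)) :=
    ⟨by simp only [ne_eq, Measure.restrict_eq_zero, volume_dyadicInterval, ENNReal.ofReal_eq_zero,
      not_le]; positivity⟩
  exact inv_average_le_average_inv (ae_of_all _ hw_pos) (integrableOn_dyadicInterval hw)
    (integrableOn_dyadicInterval hwinv)

lemma setIntegral_comp_floor_div_eq_sum (G : ℤ → ℝ) {E : Set ℝ} (hE : MeasurableSet E)
    (S : Finset ℤ) (hES : E ⊆ ⋃ j ∈ S, dyadicInterval k j) :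
    ∫ x in E, G ⌊x / (2 : ℝ) ^ (-k)⌋ = ∑ j ∈ S, volume.real (dyadicInterval k j ∩ E) * G j := by
  have hpieces : E = ⋃ j ∈ S, dyadicInterval k j ∩ E := by
    rw [← iUnion₂_inter, inter_eq_right.2 hES]
  have hconst : ∀ j, EqOn (fun x ↦ G ⌊x / (2 : ℝ) ^ (-k)⌋) (fun _ ↦ G j)
      (dyadicInterval k j ∩ E) := fun j x hx ↦ congrArg G (mem_dyadicInterval_iff.1 hx.1)
  have hmeas : ∀ j, MeasurableSet (dyadicInterval k j ∩ E) :=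
    fun j ↦ measurableSet_dyadicInterval.inter hE
  have hfinite : ∀ j, volume (dyadicInterval k j ∩ E) ≠ ⊤ := fun j ↦
    ne_top_of_le_ne_top (by simp [volume_dyadicInterval]) (measure_mono inter_subset_left)
  conv_lhs => rw [hpieces]
  rw [integral_biUnion_finset S (fun j _ ↦ hmeas j)
    (fun i _ j _ hij ↦ (pairwise_disjoint_dyadicInterval k hij).mono inter_subset_left
      inter_subset_left)
    (fun j _ ↦ (integrableOn_const (hfinite j)).congr_fun (hconst j).symm (hmeas j))]
  refine Finset.sum_congr rfl fun j _ ↦ ?_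
  rw [setIntegral_congr_fun (hmeas j) (hconst j), setIntegral_const, smul_eq_mul]

variable {J : Set ℝ} {a b : ℝ}

lemma mem_Icc_of_dyadicInterval_inter_nonempty (hJ : J ⊆ Icc a b)
    (hj : (dyadicInterval k j ∩ J).Nonempty) :
    j ∈ Icc ⌊a / (2 : ℝ) ^ (-k)⌋ ⌊b / (2 : ℝ) ^ (-k)⌋ := by
  obtain ⟨x, hxI, hxJ⟩ := hj
  rw [← mem_dyadicInterval_iff.1 hxI]
  exact ⟨Int.floor_mono (by gcongr; exact (hJ hxJ).1),
    Int.floor_mono (by gcongr; exact (hJ hxJ).2)⟩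

lemma finite_setOf_dyadicInterval_inter_nonempty (k : ℤ) (hJ : J ⊆ Icc a b) :
    {j | (dyadicInterval k j ∩ J).Nonempty}.Finite :=
  (finite_Icc _ _).subset fun _ ↦ mem_Icc_of_dyadicInterval_inter_nonempty hJ

lemma dyadicInterval_inter_eq_empty {hfin : {j | (dyadicInterval k j ∩ J).Nonempty}.Finite}
    (hj : j ∉ hfin.toFinset) : dyadicInterval k j ∩ J = ∅ :=
  not_nonempty_iff_eq_empty.1 (by simpa using hj)

lemma dyadicEnvelope_eq_biUnion (hfin : {j | (dyadicInterval k j ∩ J).Nonempty}.Finite) :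
    dyadicEnvelope k J = ⋃ j ∈ hfin.toFinset, dyadicInterval k j := by
  simp [dyadicEnvelope]

lemma subset_dyadicEnvelope (k : ℤ) (J : Set ℝ) : J ⊆ dyadicEnvelope k J := fun x hx ↦
  mem_iUnion₂.2 ⟨_, ⟨x, mem_dyadicInterval_floor k x, hx⟩, mem_dyadicInterval_floor k x⟩

lemma volume_dyadicEnvelope_le (hJ : J ⊆ Icc a b) :
    volume (dyadicEnvelope k J) ≤ ENNReal.ofReal (b - a + 2 * 2 ^ (-k)) := by
  set h : ℝ := 2 ^ (-k)
  have hh : 0 < h := by positivity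
  set m := ⌊a / h⌋
  set n := ⌊b / h⌋
  have hsub : dyadicEnvelope k J ⊆ Ico (m * h) ((n + 1) * h) := by
    refine iUnion₂_subset fun j hj ↦ ?_
    obtain ⟨hmj, hjn⟩ := mem_Icc_of_dyadicInterval_inter_nonempty hJ hj
    exact Ico_subset_Ico (by gcongr) (by gcongr)
  have hn : n * h ≤ b := (le_div_iff₀ hh).1 (Int.floor_le _)
  have hm : a < (m + 1) * h := (div_lt_iff₀ hh).1 (Int.lt_floor_add_one _)
  refine (measure_mono hsub).trans ?_
  rw [Real.volume_Ico]
  exact ENNReal.ofReal_le_ofReal (by linarith)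

theorem setIntegral_inv_dyadicAvg_le {w : ℝ → ℝ} (hw_pos : ∀ x, 0 < w x)
    (hw : LocallyIntegrable w volume) (hwinv : LocallyIntegrable (fun x ↦ (w x)⁻¹) volume)
    (hJmeas : MeasurableSet J) (hJ : J ⊆ Icc a b) :
    ∫ x in J, (dyadicAvg w k x)⁻¹ ≤
      ∑' j : ℤ, ((volume (dyadicInterval k j ∩ J)).toReal / (2 : ℝ) ^ (-k)) *
        ∫ t in dyadicInterval k j, (w t)⁻¹ := by
  set h : ℝ := 2 ^ (-k)
  have hfin := finite_setOf_dyadicInterval_inter_nonempty k hJ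
  rw [tsum_eq_sum (s := hfin.toFinset) fun j hj ↦ by simp [dyadicInterval_inter_eq_empty hj]]
  unfold dyadicAvg
  rw [setIntegral_comp_floor_div_eq_sum (fun j ↦ (h⁻¹ * ∫ t in dyadicInterval k j, w t)⁻¹)
    hJmeas _ ((subset_dyadicEnvelope k J).trans (dyadicEnvelope_eq_biUnion hfin).subset)]
  refine Finset.sum_le_sum fun j _ ↦ ?_
  calc volume.real (dyadicInterval k j ∩ J) * (h⁻¹ * ∫ t in dyadicInterval k j, w t)⁻¹
      ≤ volume.real (dyadicInterval k j ∩ J) * (h⁻¹ * ∫ t in dyadicInterval k j, (w t)⁻¹) := by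
        gcongr
        simpa only [setAverage_dyadicInterval] using
          inv_setAverage_dyadicInterval_le hw_pos hw hwinv
    _ = _ := by rw [measureReal_def]; ring

theorem tsum_le_setIntegral_dyadicEnvelope {f : ℝ → ℝ} (hf_nonneg : ∀ x, 0 ≤ f x)
    (hf : LocallyIntegrable f volume) (hJ : J ⊆ Icc a b) :
    ∑' j : ℤ, ((volume (dyadicInterval k j ∩ J)).toReal / (2 : ℝ) ^ (-k)) *
        ∫ t in dyadicInterval k j, f t ≤
      ∫ x in dyadicEnvelope k J, f x := by
  have hfin := finite_setOf_dyadicInterval_inter_nonempty k hJ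
  rw [tsum_eq_sum (s := hfin.toFinset) fun j hj ↦ by simp [dyadicInterval_inter_eq_empty hj],
    dyadicEnvelope_eq_biUnion hfin,
    integral_biUnion_finset _ (fun _ _ ↦ measurableSet_dyadicInterval)
      (fun _ _ _ _ hij ↦ pairwise_disjoint_dyadicInterval k hij)
      (fun _ _ ↦ integrableOn_dyadicInterval hf)]
  refine Finset.sum_le_sum fun j _ ↦ mul_le_of_le_one_left
    (integral_nonneg hf_nonneg)
    (div_le_one_of_le₀ ?_ (by positivity))
  rw [← measureReal_def, ← volume_real_dyadicInterval (j := j)]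
  exact measureReal_mono inter_subset_left (by simp [volume_dyadicInterval])

end Dyadic

/-- for a weight `w > 0` and `u = Σ_{I∈𝒫_k} ⟨w⟩_I χ_I`, for every bounded
interval `J`:
`⟨u⁻¹⟩_J ≤ (1/|J|) Σ_{I∈𝒫_k, I∩J≠∅} (|I∩J|/|I|) ∫_I w⁻¹`, and in particular
`⟨u⁻¹⟩_J ≤ 3⟨w⁻¹⟩_{J*}` when `|J| > 2^{-k}`. -/
theorem avg_inv_dyadicAvg_le
    (w : ℝ → ℝ) (hw_pos : ∀ x, 0 < w x) (hw_loc : LocallyIntegrable w volume)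
    (hwinv_loc : LocallyIntegrable (fun x => (w x)⁻¹) volume)
    (k : ℤ) (a b : ℝ) (hab : a < b) :
    ((b - a)⁻¹ * ∫ x in Set.Ioc a b, (dyadicAvg w k x)⁻¹ ≤
      (b - a)⁻¹ * ∑' j : ℤ,
        ((volume (dyadicInterval k j ∩ Set.Ioc a b)).toReal / (2 : ℝ) ^ (-k)) *
          ∫ t in dyadicInterval k j, (w t)⁻¹) ∧
    ((2 : ℝ) ^ (-k) < b - a →
      (b - a)⁻¹ * ∫ x in Set.Ioc a b, (dyadicAvg w k x)⁻¹ ≤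
        3 * (((volume (dyadicEnvelope k (Set.Ioc a b))).toReal)⁻¹ *
          ∫ x in dyadicEnvelope k (Set.Ioc a b), (w x)⁻¹)) := by
  have hJ : Ioc a b ⊆ Icc a b := Ioc_subset_Icc_self
  have hlen : 0 < b - a := sub_pos.2 hab
  have hsplit := setIntegral_inv_dyadicAvg_le (k := k) hw_pos hw_loc hwinv_loc measurableSet_Ioc hJ
  refine ⟨by gcongr, fun hscale ↦ ?_⟩
  have henv_vol := volume_dyadicEnvelope_le (k := k) hJ
  set V := (volume (dyadicEnvelope k (Ioc a b))).toReal
  have hV_le : V ≤ b - a + 2 * 2 ^ (-k) := ENNReal.toReal_le_of_le_ofReal (by positivity) henv_vol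
  have hV_ge : b - a ≤ V := by
    rw [← Real.volume_real_Ioc_of_le hab.le]
    exact measureReal_mono (subset_dyadicEnvelope k _) (ne_top_of_le_ne_top (by simp) henv_vol)
  have hlen_inv : (b - a)⁻¹ ≤ 3 * V⁻¹ := by
    rw [← div_eq_mul_inv, le_div_iff₀ (by linarith), inv_mul_le_iff₀ hlen]
    linarith
  calc (b - a)⁻¹ * ∫ x in Ioc a b, (dyadicAvg w k x)⁻¹
      ≤ (b - a)⁻¹ * ∫ x in dyadicEnvelope k (Ioc a b), (w x)⁻¹ := by
        gcongr
        exact hsplit.trans (tsum_le_setIntegral_dyadicEnvelope (fun x ↦ (inv_pos.2 (hw_pos x)).le)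
          hwinv_loc hJ)
    _ ≤ 3 * V⁻¹ * ∫ x in dyadicEnvelope k (Ioc a b), (w x)⁻¹ := by
        gcongr
        exact integral_nonneg fun x ↦ (inv_pos.2 (hw_pos x)).le
    _ = _ := mul_assoc _ _ _
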